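/- Suppose (f_j^R, f_j^I) satisfy condition H1 with constants λ_j^{RR}, λ_j^{RI}, λ_j^{IR}, λ_j^{II} and (g_j^R, g_j^I) satisfy condition H2 with constants μ_j^{RR}, μ_j^{RI}, μ_j^{IR}, μ_j^{II}, for j = 1,…,n. Suppose there exist positive reals ξ_1,…,ξ_n, φ_1,…,φ_n such that for every j = 1,…,n both: (i) ξ_j(−d_j + (a_{jj}^R)⁺λ_j^{RR} + (−a_{jj}^I)⁺λ_j^{IR}) + Σ_{k≠j} ξ_k|a_{jk}^R|λ_k^{RR} + Σ_{k=1}^n φ_k|a_{jk}^R|λ_k^{RI} + Σ_{k≠j} ξ_k|a_{jk}^I|λ_k^{IR} + Σ_{k=1}^n φ_k|a_{jk}^I|λ_k^{II} + Σ_{k=1}^n ξ_k|b_{jk}^R|μ_k^{RR} + Σ_{k=1}^n φ_k|b_{jk}^R|μ_k^{RI} + Σ_{k=1}^n ξ_k|b_{jk}^I|μ_k^{IR} + Σ_{k=1}^n φ_k|b_{jk}^I|μ_k^{II} < 0, and (ii) φ_j(−d_j + (a_{jj}^R)⁺λ_j^{II} + (a_{jj}^I)⁺λ_j^{RI}) +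 Σ_{k=1}^n ξ_k|a_{jk}^R|λ_k^{IR} + Σ_{k≠j} φ_k|a_{jk}^R|λ_k^{II} + Σ_{k=1}^n ξ_k|a_{jk}^I|λ_k^{RR} + Σ_{k≠j} φ_k|a_{jk}^I|λ_k^{RI} + Σ_{k=1}^n ξ_k|b_{jk}^R|μ_k^{IR} + Σ_{k=1}^n φ_k|b_{jk}^R|μ_k^{II} + Σ_{k=1}^n ξ_k|b_{jk}^I|μ_k^{RR} + Σ_{k=1}^n φ_k|b_{jk}^I|μ_k^{RI} < 0. If the network admits at least one solution, then it has exactly one equilibrium Z̄ ∈ ℝ^{2n}, and for every solution Z(t) there exist constants c > 0 and δ > 0 such that ‖Z(t) − Z̄‖ ≤ c e^{−δt} (Euclidean norm) for all t ≥ 0. -/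

import Mathlib

/-!
Subtract two solutions and linearise `f` and `g` by the mean value theorem: the difference `E`
satisfies a linear delay equation whose coefficients are dominated by matrices `A`
(instantaneous, with a one-sided bound on the diagonal) and `B` (delayed), and the hypotheses say
`(A + B) w < 0` for the weights `w = (ξ, φ)`. Choosing `δ > 0` with `(A + e^{δτ} B) w + δ w < 0`,
no component of `|E|` can reach the barrier `w M e^{-δ t}` first (Halanay's argument), so any two
solutions approach each other exponentially. Comparing a solution with its translates shows that it
converges; its limit is an equilibrium, two equilibria (constant solutions) coincide, and every
solution converges exponentially to the equilibrium.
-/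

open Finset

/-- A solution of the delayed complex-valued network, decomposed into real and
imaginary parts. -/
def IsSolution (n : ℕ) (d : Fin n → ℝ)
    (aR aI bR bI τ : Fin n → Fin n → ℝ)
    (uR uI : Fin n → ℝ)
    (fR fI gR gI : Fin n → ℝ → ℝ → ℝ)
    (zR zI : Fin n → ℝ → ℝ) : Prop :=
  (∀ j, ContDiff ℝ 1 (zR j)) ∧ (∀ j, ContDiff ℝ 1 (zI j)) ∧
  (∀ j : Fin n, ∀ t : ℝ, 0 ≤ t →
    deriv (zR j) t =
      -(d j) * zR j t
      + (∑ k, (aR j k * fR k (zR k t) (zI k t) - aI j k * fI k (zR k t) (zI k t)))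
      + (∑ k, (bR j k * gR k (zR k (t - τ j k)) (zI k (t - τ j k))
               - bI j k * gI k (zR k (t - τ j k)) (zI k (t - τ j k))))
      + uR j) ∧
  (∀ j : Fin n, ∀ t : ℝ, 0 ≤ t →
    deriv (zI j) t =
      -(d j) * zI j t
      + (∑ k, (aR j k * fI k (zR k t) (zI k t) + aI j k * fR k (zR k t) (zI k t)))
      + (∑ k, (bR j k * gI k (zR k (t - τ j k)) (zI k (t - τ j k))
               + bI j k * gR k (zR k (t - τ j k)) (zI k (t - τ j k))))
      + uI j)

/-- An equilibrium of the network: a point of ℝ^{2n} at which both right-hand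
sides vanish. -/
def IsEquilibrium (n : ℕ) (d : Fin n → ℝ)
    (aR aI bR bI : Fin n → Fin n → ℝ)
    (uR uI : Fin n → ℝ)
    (fR fI gR gI : Fin n → ℝ → ℝ → ℝ)
    (zbR zbI : Fin n → ℝ) : Prop :=
  (∀ j : Fin n,
    -(d j) * zbR j
    + (∑ k, (aR j k * fR k (zbR k) (zbI k) - aI j k * fI k (zbR k) (zbI k)))
    + (∑ k, (bR j k * gR k (zbR k) (zbI k) - bI j k * gI k (zbR k) (zbI k)))
    + uR j = 0) ∧
  (∀ j : Fin n,
    -(d j) * zbI j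
    + (∑ k, (aR j k * fI k (zbR k) (zbI k) + aI j k * fR k (zbR k) (zbI k)))
    + (∑ k, (bR j k * gI k (zbR k) (zbI k) + bI j k * gR k (zbR k) (zbI k)))
    + uI j = 0)

/-- Condition H1: continuously differentiable with positive, bounded partial
derivatives. -/
def CondH1 (f1 f2 : ℝ → ℝ → ℝ) (lRR lRI lIR lII : ℝ) : Prop :=
  ContDiff ℝ 1 (fun p : ℝ × ℝ => f1 p.1 p.2) ∧
  ContDiff ℝ 1 (fun p : ℝ × ℝ => f2 p.1 p.2) ∧
  (∀ x y : ℝ,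
    (0 < deriv (fun s => f1 s y) x ∧ deriv (fun s => f1 s y) x ≤ lRR) ∧
    (0 < deriv (fun s => f1 x s) y ∧ deriv (fun s => f1 x s) y ≤ lRI) ∧
    (0 < deriv (fun s => f2 s y) x ∧ deriv (fun s => f2 s y) x ≤ lIR) ∧
    (0 < deriv (fun s => f2 x s) y ∧ deriv (fun s => f2 x s) y ≤ lII))

/-- Condition H2: continuously differentiable with bounded partial derivatives. -/
def CondH2 (g1 g2 : ℝ → ℝ → ℝ) (mRR mRI mIR mII : ℝ) : Prop :=
  ContDiff ℝ 1 (fun p : ℝ × ℝ => g1 p.1 p.2) ∧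
  ContDiff ℝ 1 (fun p : ℝ × ℝ => g2 p.1 p.2) ∧
  (∀ x y : ℝ,
    |deriv (fun s => g1 s y) x| ≤ mRR ∧
    |deriv (fun s => g1 x s) y| ≤ mRI ∧
    |deriv (fun s => g2 s y) x| ≤ mIR ∧
    |deriv (fun s => g2 x s) y| ≤ mII)

open Filter Topology Real

lemma exists_eq_deriv_mul_sub {f : ℝ → ℝ} (hf : Differentiable ℝ f) (x y : ℝ) :
    ∃ c, f x - f y = deriv f c * (x - y) := by
  rcases lt_trichotomy x y with h | rfl | h
  · obtain ⟨c, -, hc⟩ := exists_deriv_eq_slope f h hf.continuous.continuousOn hf.differentiableOn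
    refine ⟨c, ?_⟩
    rw [hc, ← neg_sub y x, mul_neg, div_mul_cancel₀ _ (sub_ne_zero.2 h.ne')]
    ring
  · exact ⟨x, by simp⟩
  · obtain ⟨c, -, hc⟩ := exists_deriv_eq_slope f h hf.continuous.continuousOn hf.differentiableOn
    exact ⟨c, by rw [hc, div_mul_cancel₀ _ (sub_ne_zero.2 h.ne')]⟩

lemma exists_sub_eq_of_deriv_mem {f : ℝ → ℝ → ℝ}
    (hf : Differentiable ℝ fun p : ℝ × ℝ => f p.1 p.2) {S T : Set ℝ}
    (hS : ∀ x y, deriv (fun s => f s y) x ∈ S) (hT : ∀ x y, deriv (fun s => f x s) y ∈ T)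
    (x y x' y' : ℝ) :
    ∃ α ∈ S, ∃ β ∈ T, f x y - f x' y' = α * (x - x') + β * (y - y') := by
  obtain ⟨c, hc⟩ := exists_eq_deriv_mul_sub (f := fun s => f s y)
    (hf.comp (differentiable_id.prodMk (differentiable_const y))) x x'
  obtain ⟨c', hc'⟩ := exists_eq_deriv_mul_sub (f := fun s => f x' s)
    (hf.comp ((differentiable_const x').prodMk differentiable_id)) y y'
  exact ⟨_, hS c y, _, hT x' c', by linear_combination hc + hc'⟩

lemma deriv_nonneg_of_forall_Ico_le {G : ℝ → ℝ} {a t : ℝ} (hat : a < t)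
    (hG : DifferentiableAt ℝ G t) (hle : ∀ s ∈ Set.Ico a t, G s ≤ G t) : 0 ≤ deriv G t := by
  have hmax : IsLocalMaxOn G (Set.Iic t) t :=
    mem_of_superset (Icc_mem_nhdsLE hat) fun s hs => by
      rcases hs.2.lt_or_eq with h | h
      · exact hle s ⟨hs.1, h⟩
      · simp [h]
  simpa using hmax.hasFDerivWithinAt_nonpos hG.hasFDerivAt.hasFDerivWithinAt (y := -1)
    (mem_posTangentConeAt_of_segment_subset (by simp [segment_eq_Icc', Set.Icc_subset_Iic_self]))

/-- By the mean value theorem `f (t + 1) - f t = f' ξₜ` with `ξₜ → ∞`. -/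
lemma eq_zero_of_tendsto_deriv {f : ℝ → ℝ} (hf : Differentiable ℝ f) {L c : ℝ}
    (hL : Tendsto f atTop (𝓝 L)) (hc : Tendsto (deriv f) atTop (𝓝 c)) : c = 0 := by
  choose ξ hξ hslope using fun t : ℝ =>
    exists_deriv_eq_slope f (lt_add_one t) hf.continuous.continuousOn hf.differentiableOn
  have hξ_top : Tendsto ξ atTop atTop := tendsto_atTop_mono (fun t => (hξ t).1.le) tendsto_id
  have hdiff : Tendsto (fun t => f (t + 1) - f t) atTop (𝓝 (L - L)) :=
    (hL.comp (tendsto_atTop_add_const_right _ 1 tendsto_id)).sub hL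
  refine tendsto_nhds_unique ((hc.comp hξ_top).congr fun t => ?_) (sub_self L ▸ hdiff)
  simp [hslope]

lemma tendsto_mul_exp_neg_mul_atTop (C : ℝ) {δ : ℝ} (hδ : 0 < δ) :
    Tendsto (fun t => C * exp (-δ * t)) atTop (𝓝 0) := by
  simpa using (tendsto_exp_neg_atTop_nhds_zero.comp (tendsto_id.const_mul_atTop hδ)).const_mul C

/-- The values at the integers form a Cauchy sequence with geometric steps `C e^{-δ m}`; the
same bound controls `f t - f ⌊t⌋`. -/
lemma exists_tendsto_of_abs_sub_le_mul_exp {f : ℝ → ℝ} {C δ : ℝ} (hδ : 0 < δ)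
    (hf : ∀ t ≥ 0, ∀ r ∈ Set.Icc (0 : ℝ) 1, |f (t + r) - f t| ≤ C * exp (-δ * t)) :
    ∃ L, Tendsto f atTop (𝓝 L) := by
  set x := exp (-δ)
  have hx : x < 1 := exp_lt_one_iff.2 (by linarith)
  have hpow : ∀ m : ℕ, exp (-δ * m) = x ^ m := fun m => by rw [← exp_nat_mul]; ring_nf
  have hstep : ∀ m : ℕ, dist (f m) (f (m + 1 : ℕ)) ≤ C * x ^ m := fun m => by
    rw [dist_comm, Real.dist_eq, ← hpow, Nat.cast_succ]
    exact hf m m.cast_nonneg 1 ⟨zero_le_one, le_rfl⟩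
  obtain ⟨L, hL⟩ := cauchySeq_tendsto_of_complete (cauchySeq_of_le_geometric x C hx hstep)
  have hlim : Tendsto (fun t : ℝ => (C + C / (1 - x)) * x ^ ⌊t⌋₊) atTop (𝓝 0) := by
    have := ((tendsto_pow_atTop_nhds_zero_of_lt_one (exp_pos _).le hx).const_mul
      (C + C / (1 - x))).comp (tendsto_nat_floor_atTop (α := ℝ))
    rwa [mul_zero] at this
  refine ⟨L, tendsto_iff_norm_sub_tendsto_zero.2 <|
    squeeze_zero' (Eventually.of_forall fun _ => norm_nonneg _) ?_ hlim⟩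
  filter_upwards [eventually_ge_atTop 0] with t ht
  set m := ⌊t⌋₊
  have h₁ : |f t - f m| ≤ C * x ^ m := by
    have := hf m m.cast_nonneg (t - m)
      ⟨sub_nonneg.2 (Nat.floor_le ht), by linarith [Nat.lt_floor_add_one t]⟩
    rwa [add_sub_cancel, hpow] at this
  have h₂ := dist_le_of_le_geometric_of_tendsto x C hx hstep hL m
  rw [Real.dist_eq] at h₂
  rw [Real.norm_eq_abs]
  calc |f t - L| ≤ |f t - f m| + |f m - L| := abs_sub_le _ _ _
    _ ≤ C * x ^ m + C * x ^ m / (1 - x) := add_le_add h₁ h₂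
    _ = (C + C / (1 - x)) * x ^ m := by ring

lemma mul_le_abs_of_abs_eq_one {σ : ℝ} (hσ : |σ| = 1) (x : ℝ) : σ * x ≤ |x| :=
  (le_abs_self _).trans_eq (by rw [abs_mul, hσ, one_mul])

lemma exists_abs_eq_one_mul_eq_abs (x : ℝ) : ∃ σ : ℝ, |σ| = 1 ∧ σ * x = |x| := by
  rcases le_or_gt 0 x with hx | hx
  · exact ⟨1, by simp, by simp [abs_of_nonneg hx]⟩
  · exact ⟨-1, by simp, by simp [abs_of_neg hx]⟩

lemma abs_mul_add_mul_le {u v x y X Y : ℝ} (hx : |x| ≤ X) (hy : |y| ≤ Y) :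
    |u * x + v * y| ≤ |u| * X + |v| * Y := by
  calc |u * x + v * y| ≤ |u| * |x| + |v| * |y| := by
        simpa only [abs_mul] using abs_add_le (u * x) (v * y)
    _ ≤ |u| * X + |v| * Y := by gcongr

lemma mul_add_mul_le_max {u v x y X Y : ℝ} (hx : x ∈ Set.Icc 0 X) (hy : y ∈ Set.Icc 0 Y) :
    u * x + v * y ≤ max u 0 * X + max v 0 * Y := by
  have h₁ : u * x ≤ max u 0 * X :=
    (mul_le_mul_of_nonneg_right (le_max_left u 0) hx.1).trans
      (mul_le_mul_of_nonneg_left hx.2 (le_max_right u 0))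
  have h₂ : v * y ≤ max v 0 * Y :=
    (mul_le_mul_of_nonneg_right (le_max_left v 0) hy.1).trans
      (mul_le_mul_of_nonneg_left hy.2 (le_max_right v 0))
  linarith

lemma exists_pos_forall_add_exp_mul_add_mul_neg {ι : Type*} [Finite ι] {α β : ι → ℝ}
    (w : ι → ℝ) (τ : ℝ) (h : ∀ i, α i + β i < 0) :
    ∃ δ > 0, ∀ i, α i + exp (δ * τ) * β i + δ * w i < 0 := by
  have hev : ∀ᶠ δ in 𝓝 (0 : ℝ), ∀ i, α i + exp (δ * τ) * β i + δ * w i < 0 := by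
    refine eventually_all.2 fun i => ?_
    have hc : Continuous fun δ : ℝ => α i + exp (δ * τ) * β i + δ * w i := by fun_prop
    exact hc.continuousAt.eventually_lt continuousAt_const (by simpa using h i)
  exact ((hev.filter_mono (nhdsWithin_le_nhds (s := Set.Ioi 0))).and
    self_mem_nhdsWithin).exists.imp fun δ h => ⟨h.2, h.1⟩

section Halanay

variable {P : Type*} [Fintype P]

/-- The coefficient of `E p t` itself is only bounded above: a negative coefficient there
(such as `-d_j`) is what makes `|E p|` decrease. -/
def HasDominatedDelayDerivAt (E : P → ℝ → ℝ) (A B : P → P → ℝ) (τ : ℝ) (p : P) (t : ℝ) :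
    Prop :=
  ∃ a b s : P → ℝ, a p ≤ A p p ∧ (∀ q ≠ p, |a q| ≤ A p q) ∧ (∀ q, |b q| ≤ B p q) ∧
    (∀ q, s q ∈ Set.Icc (t - τ) t) ∧
    deriv (E p) t = ∑ q, a q * E q t + ∑ q, b q * E q (s q)

namespace HasDominatedDelayDerivAt

variable {E : P → ℝ → ℝ} {A B : P → P → ℝ} {τ t : ℝ} {p : P}

lemma mul_deriv_le {w : P → ℝ} {σ Q Q' : ℝ} (h : HasDominatedDelayDerivAt E A B τ p t)
    (hσ : |σ| = 1) (hp : σ * E p t = w p * Q) (hnow : ∀ q, |E q t| ≤ w q * Q)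
    (hpast : ∀ q, ∀ s ∈ Set.Icc (t - τ) t, |E q s| ≤ w q * Q') :
    σ * deriv (E p) t ≤ (∑ q, A p q * w q) * Q + (∑ q, B p q * w q) * Q' := by
  obtain ⟨a, b, s, hdiag, hoff, hb, hs, hE⟩ := h
  rw [hE, mul_add, mul_sum, mul_sum, sum_mul, sum_mul]
  refine add_le_add (sum_le_sum fun q _ => ?_) (sum_le_sum fun q _ => ?_)
  · by_cases hq : q = p
    · subst hq
      have hwQ : 0 ≤ w q * Q := (abs_nonneg _).trans (hnow q)
      calc σ * (a q * E q t) = a q * (w q * Q) := by rw [← hp]; ring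
        _ ≤ A q q * (w q * Q) := mul_le_mul_of_nonneg_right hdiag hwQ
        _ = A q q * w q * Q := by ring
    · calc σ * (a q * E q t) ≤ |a q| * |E q t| :=
            (mul_le_abs_of_abs_eq_one hσ _).trans_eq (abs_mul _ _)
        _ ≤ A p q * (w q * Q) :=
            mul_le_mul (hoff q hq) (hnow q) (abs_nonneg _) ((abs_nonneg _).trans (hoff q hq))
        _ = A p q * w q * Q := by ring
  · calc σ * (b q * E q (s q)) ≤ |b q| * |E q (s q)| :=
          (mul_le_abs_of_abs_eq_one hσ _).trans_eq (abs_mul _ _)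
      _ ≤ B p q * (w q * Q') :=
          mul_le_mul (hb q) (hpast q _ (hs q)) (abs_nonneg _) ((abs_nonneg _).trans (hb q))
      _ = B p q * w q * Q' := by ring

lemma of_comp_equiv (e : P ≃ P)
    (h : HasDominatedDelayDerivAt (fun p => E (e p)) (fun p q => A (e p) (e q))
      (fun p q => B (e p) (e q)) τ p t) :
    HasDominatedDelayDerivAt E A B τ (e p) t := by
  obtain ⟨a, b, s, hdiag, hoff, hb, hs, hE⟩ := h
  refine ⟨fun q => a (e.symm q), fun q => b (e.symm q), fun q => s (e.symm q),
    by simpa using hdiag, fun q hq => ?_, fun q => by simpa using hb (e.symm q),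
    fun q => hs (e.symm q), ?_⟩
  · simpa using hoff (e.symm q) (by rwa [ne_eq, Equiv.symm_apply_eq])
  · rw [hE, ← e.sum_comp fun q => a (e.symm q) * E q t,
      ← e.sum_comp fun q => b (e.symm q) * E q (s (e.symm q))]
    simp

end HasDominatedDelayDerivAt

lemma exists_first_zero {F : P → ℝ → ℝ} (hF : ∀ p, Continuous (F p)) {a b : ℝ}
    (ha : ∀ p, F p a < 0) (hab : a ≤ b) {p₀ : P} (hb : 0 ≤ F p₀ b) :
    ∃ t₀ ∈ Set.Ioc a b, (∃ p, F p t₀ = 0) ∧ (∀ p, F p t₀ ≤ 0) ∧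
      ∀ s ∈ Set.Ico a t₀, ∀ p, F p s < 0 := by
  set K := Set.Icc a b ∩ ⋃ p, {t | 0 ≤ F p t}
  have hK : IsCompact K := isCompact_Icc.inter_right
    (isClosed_iUnion_of_finite fun p => isClosed_le continuous_const (hF p))
  have hKne : K.Nonempty := ⟨b, ⟨hab, le_rfl⟩, Set.mem_iUnion.2 ⟨p₀, hb⟩⟩
  obtain ⟨⟨ha₀, hb₀⟩, hK₀⟩ := hK.sInf_mem hKne
  obtain ⟨p, hp⟩ := Set.mem_iUnion.1 hK₀
  set t₀ := sInf K
  have hbefore : ∀ s ∈ Set.Ico a t₀, ∀ q, F q s < 0 := fun s hs q => not_le.1 fun hq =>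
    hs.2.not_ge (csInf_le hK.bddBelow ⟨⟨hs.1, hs.2.le.trans hb₀⟩, Set.mem_iUnion.2 ⟨q, hq⟩⟩)
  have hat : a < t₀ := ha₀.lt_of_ne fun h => (ha p).not_ge (h ▸ hp)
  have hle : ∀ q, F q t₀ ≤ 0 := fun q =>
    le_of_tendsto ((hF q).continuousAt.tendsto.mono_left nhdsWithin_le_nhds)
      (eventually_of_mem (Ico_mem_nhdsLT hat) fun s hs => (hbefore s hs q).le)
  exact ⟨t₀, ⟨hat, hb₀⟩, ⟨p, le_antisymm (hle p) hp⟩, hle, hbefore⟩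

variable {E : P → ℝ → ℝ} {A B : P → P → ℝ} {w : P → ℝ} {τ δ M : ℝ}

/-- Were `|E p|` to reach the barrier `w p M e^{-δ t}` at `t`, the delayed values being below
`e^{δ τ}` times the barrier at `t`, the rate condition would make `|E p|` cross it with a smaller
slope. -/
lemma HasDominatedDelayDerivAt.abs_lt_of_forall_Icc_le {p : P} {t a : ℝ}
    (h : HasDominatedDelayDerivAt E A B τ p t) (hw : ∀ q, 0 ≤ w q)
    (hE : Differentiable ℝ (E p)) (hδ : 0 ≤ δ) (hM : 0 < M)
    (hrate : ∑ q, A p q * w q + exp (δ * τ) * ∑ q, B p q * w q + δ * w p < 0)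
    (hat : a < t) (haτ : a ≤ t - τ)
    (hle : ∀ q, ∀ s ∈ Set.Icc a t, |E q s| ≤ w q * M * exp (-δ * s)) :
    |E p t| < w p * M * exp (-δ * t) := by
  set b : ℝ → ℝ := fun t => M * exp (-δ * t)
  have hbelow : ∀ q, ∀ s ∈ Set.Icc a t, |E q s| ≤ w q * b s := fun q s hs => by
    simpa only [b, mul_assoc] using hle q s hs
  rw [mul_assoc]
  refine (hbelow p t ⟨hat.le, le_rfl⟩).lt_of_ne fun hp => ?_
  have hpast : ∀ q, ∀ s ∈ Set.Icc (t - τ) t, |E q s| ≤ w q * (exp (δ * τ) * b t) := by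
    intro q s hs
    have hbs : b s ≤ exp (δ * τ) * b t := by
      simp only [b]
      rw [mul_left_comm, ← exp_add]
      gcongr
      nlinarith [hs.1]
    exact (hbelow q s ⟨haτ.trans hs.1, hs.2⟩).trans (mul_le_mul_of_nonneg_left hbs (hw q))
  obtain ⟨σ, hσ, hσE⟩ := exists_abs_eq_one_mul_eq_abs (E p t)
  have hupper := h.mul_deriv_le hσ (hσE.trans hp) (fun q => hbelow q t ⟨hat.le, le_rfl⟩) hpast
  set G : ℝ → ℝ := fun s => σ * E p s - w p * b s
  have hG : HasDerivAt G (σ * deriv (E p) t + δ * (w p * b t)) t := by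
    refine (((hE t).hasDerivAt.const_mul σ).sub
      ((((hasDerivAt_id t).const_mul (-δ)).exp.const_mul M).const_mul (w p))).congr_deriv ?_
    simp only [b, id]
    ring
  have hlower : 0 ≤ deriv G t := by
    refine deriv_nonneg_of_forall_Ico_le hat hG.differentiableAt fun s hs => ?_
    have := hbelow p s ⟨hs.1, hs.2.le⟩
    have := mul_le_abs_of_abs_eq_one hσ (E p s)
    simp only [G]
    linarith
  rw [hG.deriv] at hlower
  have := mul_neg_of_neg_of_pos hrate (mul_pos hM (exp_pos (-δ * t)))
  simp only [b] at hupper hlower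
  nlinarith

/-- Halanay's inequality, by a first-crossing argument. -/
theorem abs_lt_mul_exp_of_hasDominatedDelayDerivAt (hw : ∀ p, 0 < w p)
    (hE : ∀ p, Differentiable ℝ (E p)) (hτ : 0 ≤ τ) (hδ : 0 ≤ δ)
    (hrate : ∀ p, ∑ q, A p q * w q + exp (δ * τ) * ∑ q, B p q * w q + δ * w p < 0)
    (hdom : ∀ t > 0, ∀ p, HasDominatedDelayDerivAt E A B τ p t)
    (hM : ∀ p, ∀ s ∈ Set.Icc (-τ) 0, |E p s| < w p * M) :
    ∀ t ≥ 0, ∀ p, |E p t| < w p * M * exp (-δ * t) := by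
  by_contra! hfail
  obtain ⟨t₁, ht₁, p₁, h₁⟩ := hfail
  have hM₀ : 0 < M := pos_of_mul_pos_right
    ((abs_nonneg _).trans_lt (hM p₁ 0 ⟨by linarith, le_rfl⟩)) (hw p₁).le
  set F : P → ℝ → ℝ := fun p t => |E p t| - w p * M * exp (-δ * t)
  have hinit : ∀ p, ∀ s ∈ Set.Icc (-τ) 0, F p s < 0 := by
    intro p s hs
    have : w p * M ≤ w p * M * exp (-δ * s) :=
      le_mul_of_one_le_right (mul_pos (hw p) hM₀).le (one_le_exp (by nlinarith [hs.2]))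
    linarith [hM p s hs]
  obtain ⟨t₀, ht₀, ⟨p, hp⟩, hle, hlt⟩ :=
    exists_first_zero (F := F) (fun p => by have := (hE p).continuous; fun_prop)
      (fun p => hinit p (-τ) ⟨le_rfl, by linarith⟩) (by linarith : -τ ≤ t₁)
      (p₀ := p₁) (by simp only [F]; linarith)
  have ht₀pos : 0 < t₀ := by
    by_contra! h
    exact (hinit p t₀ ⟨ht₀.1.le, h⟩).ne hp
  have hbelow : ∀ q, ∀ s ∈ Set.Icc (-τ) t₀, |E q s| ≤ w q * M * exp (-δ * s) := by
    intro q s hs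
    rcases hs.2.lt_or_eq with h | rfl
    · linarith [hlt s ⟨hs.1, h⟩ q]
    · linarith [hle q]
  have := (hdom t₀ ht₀pos p).abs_lt_of_forall_Icc_le (fun q => (hw q).le) (hE p) hδ hM₀
    (hrate p) ht₀.1 (by linarith) hbelow
  simp only [F] at hp
  linarith

theorem abs_le_mul_exp_of_hasDominatedDelayDerivAt (hw : ∀ p, 0 < w p)
    (hE : ∀ p, Differentiable ℝ (E p)) (hτ : 0 ≤ τ) (hδ : 0 ≤ δ)
    (hrate : ∀ p, ∑ q, A p q * w q + exp (δ * τ) * ∑ q, B p q * w q + δ * w p < 0)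
    (hdom : ∀ t > 0, ∀ p, HasDominatedDelayDerivAt E A B τ p t)
    (hM : ∀ p, ∀ s ∈ Set.Icc (-τ) 0, |E p s| ≤ w p * M) :
    ∀ t ≥ 0, ∀ p, |E p t| ≤ w p * M * exp (-δ * t) := by
  intro t ht p
  have h : ∀ η > 0, |E p t| < w p * (M + η) * exp (-δ * t) := fun η hη =>
    abs_lt_mul_exp_of_hasDominatedDelayDerivAt hw hE hτ hδ hrate hdom
      (fun q s hs => (hM q s hs).trans_lt (by nlinarith [hw q])) t ht p
  have hc : Continuous fun η : ℝ => w p * (M + η) * exp (-δ * t) := by fun_prop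
  refine ge_of_tendsto (x := 𝓝[>] 0) ?_ (eventually_nhdsWithin_of_forall fun η hη => (h η hη).le)
  simpa using hc.continuousAt.tendsto.mono_left (nhdsWithin_le_nhds (a := (0 : ℝ)))

end Halanay

section Contracting

variable {P : Type*} [Fintype P]

def IsExpContracting (S : (P → ℝ → ℝ) → Prop) (w : P → ℝ) (τ δ : ℝ) : Prop :=
  ∀ z z', S z → S z' → ∀ M, (∀ p, ∀ s ∈ Set.Icc (-τ) 0, |z p s - z' p s| ≤ w p * M) →
    ∀ t ≥ 0, ∀ p, |z p t - z' p t| ≤ w p * M * exp (-δ * t)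

lemma exists_forall_abs_le_mul {z : P → ℝ → ℝ} {w : P → ℝ} (hw : ∀ p, 0 < w p) {K : Set ℝ}
    (hK : IsCompact K) (hz : ∀ p, ContinuousOn (z p) K) :
    ∃ M ≥ 0, ∀ p, ∀ s ∈ K, |z p s| ≤ w p * M := by
  choose C hC using fun p => hK.exists_bound_of_continuousOn (hz p)
  have hnonneg : ∀ q ∈ univ, 0 ≤ |C q| / w q := fun q _ => div_nonneg (abs_nonneg _) (hw q).le
  refine ⟨∑ p, |C p| / w p, sum_nonneg hnonneg, fun p s hs => ?_⟩
  calc |z p s| ≤ |C p| := (hC p s hs).trans (le_abs_self _)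
    _ = w p * (|C p| / w p) := (mul_div_cancel₀ _ (hw p).ne').symm
    _ ≤ w p * ∑ q, |C q| / w q :=
      mul_le_mul_of_nonneg_left (single_le_sum hnonneg (mem_univ p)) (hw p).le

lemma sqrt_sum_sq_le_of_abs_le {x w : P → ℝ} {c : ℝ} (hc : 0 ≤ c) (h : ∀ p, |x p| ≤ w p * c) :
    √(∑ p, x p ^ 2) ≤ √(∑ p, w p ^ 2) * c := by
  rw [← sqrt_sq hc, ← sqrt_mul (sum_nonneg fun _ _ => sq_nonneg _), sum_mul]
  gcongr with p
  rw [← mul_pow, ← sq_abs]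
  exact pow_le_pow_left₀ (abs_nonneg _) (h p) 2

namespace IsExpContracting

variable {S : (P → ℝ → ℝ) → Prop} {w : P → ℝ} {τ δ : ℝ}

lemma exists_abs_sub_le (h : IsExpContracting S w τ δ) (hw : ∀ p, 0 < w p)
    {z z' : P → ℝ → ℝ} (hz : S z) (hz' : S z') (hc : ∀ p, Continuous (z p))
    (hc' : ∀ p, Continuous (z' p)) :
    ∃ M ≥ 0, ∀ t ≥ 0, ∀ p, |z p t - z' p t| ≤ w p * M * exp (-δ * t) := by
  obtain ⟨M, hM₀, hM⟩ := exists_forall_abs_le_mul hw isCompact_Icc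
    fun p => ((hc p).sub (hc' p)).continuousOn
  exact ⟨M, hM₀, h z z' hz hz' M hM⟩

lemma eq_of_const (h : IsExpContracting S w τ δ) (hw : ∀ p, 0 < w p) (hδ : 0 < δ)
    {x y : P → ℝ} (hx : S fun p _ => x p) (hy : S fun p _ => y p) : x = y := by
  obtain ⟨M, -, hM⟩ :=
    h.exists_abs_sub_le hw hx hy (fun _ => continuous_const) (fun _ => continuous_const)
  funext p
  have : |x p - y p| ≤ 0 := ge_of_tendsto (tendsto_mul_exp_neg_mul_atTop (w p * M) hδ)
    (eventually_atTop.2 ⟨0, fun t ht => hM t ht p⟩)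
  exact sub_eq_zero.1 (abs_nonpos_iff.1 this)

/-- Comparing `z` with its translates by `r ∈ [0, 1]` shows that `z` is Cauchy at infinity. -/
lemma exists_tendsto (h : IsExpContracting S w τ δ) (hw : ∀ p, 0 < w p) (hδ : 0 < δ)
    (hshift : ∀ z, S z → ∀ r ≥ 0, S fun p t => z p (t + r)) {z : P → ℝ → ℝ} (hz : S z)
    (hc : ∀ p, Continuous (z p)) :
    ∃ L : P → ℝ, ∀ p, Tendsto (z p) atTop (𝓝 (L p)) := by
  obtain ⟨M, -, hM⟩ := exists_forall_abs_le_mul hw (isCompact_Icc (a := -τ) (b := 1))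
    fun p => (hc p).continuousOn
  have hstep : ∀ p, ∀ t ≥ 0, ∀ r ∈ Set.Icc (0 : ℝ) 1,
      |z p (t + r) - z p t| ≤ w p * (2 * M) * exp (-δ * t) := by
    intro p t ht r hr
    refine h _ z (hshift z hz r hr.1) hz (2 * M) (fun q s hs => ?_) t ht p
    calc |z q (s + r) - z q s| ≤ |z q (s + r)| + |z q s| := abs_sub _ _
      _ ≤ w q * M + w q * M :=
        add_le_add (hM q _ ⟨by linarith [hs.1, hr.1], by linarith [hs.2, hr.2]⟩)
          (hM q s ⟨hs.1, by linarith [hs.2]⟩)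
      _ = w q * (2 * M) := by ring
  choose L hL using fun p => exists_tendsto_of_abs_sub_le_mul_exp hδ (hstep p)
  exact ⟨L, hL⟩

end IsExpContracting

end Contracting

section Conditions

variable {f₁ f₂ : ℝ → ℝ → ℝ} {cRR cRI cIR cII : ℝ}

lemma CondH1.exists_slopes (h : CondH1 f₁ f₂ cRR cRI cIR cII) (x y x' y' : ℝ) :
    ∃ α β γ ε : ℝ,
      (α ∈ Set.Icc 0 cRR ∧ β ∈ Set.Icc 0 cRI ∧ γ ∈ Set.Icc 0 cIR ∧ ε ∈ Set.Icc 0 cII) ∧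
      f₁ x y - f₁ x' y' = α * (x - x') + β * (y - y') ∧
      f₂ x y - f₂ x' y' = γ * (x - x') + ε * (y - y') := by
  obtain ⟨h₁, h₂, hb⟩ := h
  obtain ⟨α, hα, β, hβ, e₁⟩ := exists_sub_eq_of_deriv_mem (h₁.differentiable one_ne_zero)
    (S := Set.Icc 0 cRR) (T := Set.Icc 0 cRI) (fun x y => ⟨(hb x y).1.1.le, (hb x y).1.2⟩)
    (fun x y => ⟨(hb x y).2.1.1.le, (hb x y).2.1.2⟩) x y x' y'
  obtain ⟨γ, hγ, ε, hε, e₂⟩ := exists_sub_eq_of_deriv_mem (h₂.differentiable one_ne_zero)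
    (S := Set.Icc 0 cIR) (T := Set.Icc 0 cII) (fun x y => ⟨(hb x y).2.2.1.1.le, (hb x y).2.2.1.2⟩)
    (fun x y => ⟨(hb x y).2.2.2.1.le, (hb x y).2.2.2.2⟩) x y x' y'
  exact ⟨α, β, γ, ε, ⟨hα, hβ, hγ, hε⟩, e₁, e₂⟩

lemma CondH2.exists_slopes (h : CondH2 f₁ f₂ cRR cRI cIR cII) (x y x' y' : ℝ) :
    ∃ α β γ ε : ℝ, (|α| ≤ cRR ∧ |β| ≤ cRI ∧ |γ| ≤ cIR ∧ |ε| ≤ cII) ∧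
      f₁ x y - f₁ x' y' = α * (x - x') + β * (y - y') ∧
      f₂ x y - f₂ x' y' = γ * (x - x') + ε * (y - y') := by
  obtain ⟨h₁, h₂, hb⟩ := h
  obtain ⟨α, hα, β, hβ, e₁⟩ := exists_sub_eq_of_deriv_mem (h₁.differentiable one_ne_zero)
    (S := {α | |α| ≤ cRR}) (T := {β | |β| ≤ cRI}) (fun x y => (hb x y).1)
    (fun x y => (hb x y).2.1) x y x' y'
  obtain ⟨γ, hγ, ε, hε, e₂⟩ := exists_sub_eq_of_deriv_mem (h₂.differentiable one_ne_zero)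
    (S := {γ | |γ| ≤ cIR}) (T := {ε | |ε| ≤ cII}) (fun x y => (hb x y).2.2.1)
    (fun x y => (hb x y).2.2.2) x y x' y'
  exact ⟨α, β, γ, ε, ⟨hα, hβ, hγ, hε⟩, e₁, e₂⟩

lemma CondH1.swap (h : CondH1 f₁ f₂ cRR cRI cIR cII) :
    CondH1 (fun x y => f₂ y x) (fun x y => f₁ y x) cII cIR cRI cRR :=
  ⟨h.2.1.comp (contDiff_snd.prodMk contDiff_fst), h.1.comp (contDiff_snd.prodMk contDiff_fst),
    fun x y => ⟨(h.2.2 y x).2.2.2, (h.2.2 y x).2.2.1, (h.2.2 y x).2.1, (h.2.2 y x).1⟩⟩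

lemma CondH2.swap (h : CondH2 f₁ f₂ cRR cRI cIR cII) :
    CondH2 (fun x y => f₂ y x) (fun x y => f₁ y x) cII cIR cRI cRR :=
  ⟨h.2.1.comp (contDiff_snd.prodMk contDiff_fst), h.1.comp (contDiff_snd.prodMk contDiff_fst),
    fun x y => ⟨(h.2.2 y x).2.2.2, (h.2.2 y x).2.2.1, (h.2.2 y x).2.1, (h.2.2 y x).1⟩⟩

end Conditions

section Network

variable {n : ℕ}

/-- The state is indexed by `Fin n ⊕ Fin n`, `inl j` for `z_j^R` and `inr j` for `z_j^I`.
Entry `(p, q)` bounds the coefficient of the `q`-th component in the `p`-th equation satisfied by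
the difference of two solutions once `f` is linearised by the mean value theorem (one-sided on the
diagonal, where it includes `-d_j`); `delayCoeffBound` does the same for `g`. -/
def instCoeffBound (d : Fin n → ℝ) (aR aI : Fin n → Fin n → ℝ) (lRR lRI lIR lII : Fin n → ℝ) :
    Fin n ⊕ Fin n → Fin n ⊕ Fin n → ℝ
  | .inl j, .inl k => if k = j then -d j + max (aR j j) 0 * lRR j + max (-aI j j) 0 * lIR j
      else |aR j k| * lRR k + |aI j k| * lIR k
  | .inl j, .inr k => |aR j k| * lRI k + |aI j k| * lII k
  | .inr j, .inl k => |aR j k| * lIR k + |aI j k| * lRR k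
  | .inr j, .inr k => if k = j then -d j + max (aR j j) 0 * lII j + max (aI j j) 0 * lRI j
      else |aR j k| * lII k + |aI j k| * lRI k

def delayCoeffBound (bR bI : Fin n → Fin n → ℝ) (mRR mRI mIR mII : Fin n → ℝ) :
    Fin n ⊕ Fin n → Fin n ⊕ Fin n → ℝ
  | .inl j, .inl k => |bR j k| * mRR k + |bI j k| * mIR k
  | .inl j, .inr k => |bR j k| * mRI k + |bI j k| * mII k
  | .inr j, .inl k => |bR j k| * mIR k + |bI j k| * mRR k
  | .inr j, .inr k => |bR j k| * mII k + |bI j k| * mRI k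

variable {d : Fin n → ℝ} {aR aI bR bI τ : Fin n → Fin n → ℝ} {uR uI : Fin n → ℝ}
  {fR fI gR gI : Fin n → ℝ → ℝ → ℝ} {lRR lRI lIR lII mRR mRI mIR mII : Fin n → ℝ}
  {zR zI wR wI : Fin n → ℝ → ℝ}

lemma instCoeffBound_swap :
    instCoeffBound d aR (-aI) lII lIR lRI lRR =
      fun p q => instCoeffBound d aR aI lRR lRI lIR lII p.swap q.swap := by
  ext (j | j) (k | k) <;> simp [instCoeffBound]

lemma delayCoeffBound_swap :
    delayCoeffBound bR (-bI) mII mIR mRI mRR =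
      fun p q => delayCoeffBound bR bI mRR mRI mIR mII p.swap q.swap := by
  ext (j | j) (k | k) <;> simp [delayCoeffBound]

lemma sum_ite_eq_mul_add_sum_erase (j : Fin n) (X : ℝ) (Y x : Fin n → ℝ) :
    ∑ k, (if k = j then X else Y k) * x k = X * x j + ∑ k ∈ univ.erase j, Y k * x k := by
  rw [← add_sum_erase _ _ (mem_univ j), if_pos rfl]
  exact congrArg _ (sum_congr rfl fun k hk => by rw [if_neg (ne_of_mem_erase hk)])

lemma sum_coeffBound_mul_neg {ξ φ : Fin n → ℝ}
    (hT3 : ∀ j : Fin n,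
      ξ j * (-(d j) + max (aR j j) 0 * lRR j + max (-(aI j j)) 0 * lIR j)
      + (∑ k ∈ Finset.univ.erase j, ξ k * |aR j k| * lRR k)
      + (∑ k, φ k * |aR j k| * lRI k)
      + (∑ k ∈ Finset.univ.erase j, ξ k * |aI j k| * lIR k)
      + (∑ k, φ k * |aI j k| * lII k)
      + (∑ k, ξ k * |bR j k| * mRR k) + (∑ k, φ k * |bR j k| * mRI k)
      + (∑ k, ξ k * |bI j k| * mIR k) + (∑ k, φ k * |bI j k| * mII k) < 0)
    (hT4 : ∀ j : Fin n,
      φ j * (-(d j) + max (aR j j) 0 * lII j + max (aI j j) 0 * lRI j)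
      + (∑ k, ξ k * |aR j k| * lIR k)
      + (∑ k ∈ Finset.univ.erase j, φ k * |aR j k| * lII k)
      + (∑ k, ξ k * |aI j k| * lRR k)
      + (∑ k ∈ Finset.univ.erase j, φ k * |aI j k| * lRI k)
      + (∑ k, ξ k * |bR j k| * mIR k) + (∑ k, φ k * |bR j k| * mII k)
      + (∑ k, ξ k * |bI j k| * mRR k) + (∑ k, φ k * |bI j k| * mRI k) < 0)
    (p : Fin n ⊕ Fin n) :
    ∑ q, instCoeffBound d aR aI lRR lRI lIR lII p q * Sum.elim ξ φ q
      + ∑ q, delayCoeffBound bR bI mRR mRI mIR mII p q * Sum.elim ξ φ q < 0 := by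
  simp only [mul_comm, mul_left_comm] at hT3 hT4
  rcases p with j | j <;>
  · simp only [Fintype.sum_sum_type, instCoeffBound, delayCoeffBound, Sum.elim_inl, Sum.elim_inr,
      sum_ite_eq_mul_add_sum_erase, add_mul, sum_add_distrib]
    simp only [mul_comm, mul_left_comm]
    linarith [hT3 j, hT4 j]

namespace IsSolution

lemma differentiable (hz : IsSolution n d aR aI bR bI τ uR uI fR fI gR gI zR zI)
    (p : Fin n ⊕ Fin n) : Differentiable ℝ (Sum.elim zR zI p) := by
  rcases p with j | j
  · exact (hz.1 j).differentiable one_ne_zero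
  · exact (hz.2.1 j).differentiable one_ne_zero

lemma comp_add_const (hz : IsSolution n d aR aI bR bI τ uR uI fR fI gR gI zR zI)
    {r : ℝ} (hr : 0 ≤ r) :
    IsSolution n d aR aI bR bI τ uR uI fR fI gR gI (fun j t => zR j (t + r))
      (fun j t => zI j (t + r)) := by
  refine ⟨fun j => (hz.1 j).comp (contDiff_id.add contDiff_const),
    fun j => (hz.2.1 j).comp (contDiff_id.add contDiff_const), fun j t ht => ?_, fun j t ht => ?_⟩
  · rw [deriv_comp_add_const, hz.2.2.1 j (t + r) (by linarith)]
    simp only [sub_add_eq_add_sub]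
  · rw [deriv_comp_add_const, hz.2.2.2 j (t + r) (by linarith)]
    simp only [sub_add_eq_add_sub]

/-- Under `z ↦ i z̄`, which exchanges real and imaginary parts, the network keeps its form and
its imaginary equations become the real ones. -/
lemma swap (hz : IsSolution n d aR aI bR bI τ uR uI fR fI gR gI zR zI) :
    IsSolution n d aR (-aI) bR (-bI) τ uI uR (fun k x y => fI k y x) (fun k x y => fR k y x)
      (fun k x y => gI k y x) (fun k x y => gR k y x) zI zR :=
  ⟨hz.2.1, hz.1, fun j t ht => by simpa using hz.2.2.2 j t ht,
    fun j t ht => by simpa [neg_mul, ← sub_eq_add_neg] using hz.2.2.1 j t ht⟩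

lemma deriv_sub_eq_of_slopes (hz : IsSolution n d aR aI bR bI τ uR uI fR fI gR gI zR zI)
    (hw : IsSolution n d aR aI bR bI τ uR uI fR fI gR gI wR wI) {t : ℝ} (ht : 0 ≤ t) (j : Fin n)
    {α β γ ε α' β' γ' ε' : Fin n → ℝ}
    (hfR : ∀ k, fR k (zR k t) (zI k t) - fR k (wR k t) (wI k t)
      = α k * (zR k t - wR k t) + β k * (zI k t - wI k t))
    (hfI : ∀ k, fI k (zR k t) (zI k t) - fI k (wR k t) (wI k t)
      = γ k * (zR k t - wR k t) + ε k * (zI k t - wI k t))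
    (hgR : ∀ k, gR k (zR k (t - τ j k)) (zI k (t - τ j k))
        - gR k (wR k (t - τ j k)) (wI k (t - τ j k))
      = α' k * (zR k (t - τ j k) - wR k (t - τ j k))
        + β' k * (zI k (t - τ j k) - wI k (t - τ j k)))
    (hgI : ∀ k, gI k (zR k (t - τ j k)) (zI k (t - τ j k))
        - gI k (wR k (t - τ j k)) (wI k (t - τ j k))
      = γ' k * (zR k (t - τ j k) - wR k (t - τ j k))
        + ε' k * (zI k (t - τ j k) - wI k (t - τ j k))) :
    deriv (fun t => zR j t - wR j t) t
      = -d j * (zR j t - wR j t)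
        + (∑ k, (aR j k * α k + -aI j k * γ k) * (zR k t - wR k t)
          + ∑ k, (aR j k * β k + -aI j k * ε k) * (zI k t - wI k t))
        + (∑ k, (bR j k * α' k + -bI j k * γ' k) * (zR k (t - τ j k) - wR k (t - τ j k))
          + ∑ k, (bR j k * β' k + -bI j k * ε' k) * (zI k (t - τ j k) - wI k (t - τ j k))) := by
  have e₁ : ∑ k, (aR j k * fR k (zR k t) (zI k t) - aI j k * fI k (zR k t) (zI k t))
      - ∑ k, (aR j k * fR k (wR k t) (wI k t) - aI j k * fI k (wR k t) (wI k t))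
      = ∑ k, (aR j k * α k + -aI j k * γ k) * (zR k t - wR k t)
        + ∑ k, (aR j k * β k + -aI j k * ε k) * (zI k t - wI k t) := by
    rw [← sum_sub_distrib, ← sum_add_distrib]
    exact sum_congr rfl fun k _ => by linear_combination aR j k * hfR k - aI j k * hfI k
  have e₂ : ∑ k, (bR j k * gR k (zR k (t - τ j k)) (zI k (t - τ j k))
        - bI j k * gI k (zR k (t - τ j k)) (zI k (t - τ j k)))
      - ∑ k, (bR j k * gR k (wR k (t - τ j k)) (wI k (t - τ j k))
        - bI j k * gI k (wR k (t - τ j k)) (wI k (t - τ j k)))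
      = ∑ k, (bR j k * α' k + -bI j k * γ' k) * (zR k (t - τ j k) - wR k (t - τ j k))
        + ∑ k, (bR j k * β' k + -bI j k * ε' k) * (zI k (t - τ j k) - wI k (t - τ j k)) := by
    rw [← sum_sub_distrib, ← sum_add_distrib]
    exact sum_congr rfl fun k _ => by linear_combination bR j k * hgR k - bI j k * hgI k
  have hd : deriv (fun t => zR j t - wR j t) t = deriv (zR j) t - deriv (wR j) t :=
    deriv_sub ((hz.1 j).differentiable one_ne_zero t) ((hw.1 j).differentiable one_ne_zero t)
  rw [hd, hz.2.2.1 j t ht, hw.2.2.1 j t ht]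
  linear_combination e₁ + e₂

lemma hasDominatedDelayDerivAt_inl
    (hf : ∀ j, CondH1 (fR j) (fI j) (lRR j) (lRI j) (lIR j) (lII j))
    (hg : ∀ j, CondH2 (gR j) (gI j) (mRR j) (mRI j) (mIR j) (mII j))
    {τb : ℝ} (hτ : ∀ j k, τ j k ∈ Set.Icc 0 τb)
    (hz : IsSolution n d aR aI bR bI τ uR uI fR fI gR gI zR zI)
    (hw : IsSolution n d aR aI bR bI τ uR uI fR fI gR gI wR wI) {t : ℝ} (ht : 0 ≤ t) (j : Fin n) :
    HasDominatedDelayDerivAt (fun p t => Sum.elim zR zI p t - Sum.elim wR wI p t)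
      (instCoeffBound d aR aI lRR lRI lIR lII) (delayCoeffBound bR bI mRR mRI mIR mII) τb
      (.inl j) t := by
  choose α β γ ε hf' hfR hfI using fun k =>
    (hf k).exists_slopes (zR k t) (zI k t) (wR k t) (wI k t)
  choose α' β' γ' ε' hg' hgR hgI using fun k =>
    (hg k).exists_slopes (zR k (t - τ j k)) (zI k (t - τ j k)) (wR k (t - τ j k))
      (wI k (t - τ j k))
  have habs : ∀ {x X : ℝ}, x ∈ Set.Icc 0 X → |x| ≤ X := fun hx => (abs_of_nonneg hx.1).trans_le hx.2
  refine ⟨Sum.elim (fun k => (if k = j then -d j else 0) + (aR j k * α k + -aI j k * γ k))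
      (fun k => aR j k * β k + -aI j k * ε k),
    Sum.elim (fun k => bR j k * α' k + -bI j k * γ' k) (fun k => bR j k * β' k + -bI j k * ε' k),
    Sum.elim (fun k => t - τ j k) (fun k => t - τ j k), ?_, ?_, ?_, ?_, ?_⟩
  · have := mul_add_mul_le_max (u := aR j j) (v := -aI j j) (hf' j).1 (hf' j).2.2.1
    simp only [Sum.elim_inl, instCoeffBound, if_true]
    linarith
  · rintro (k | k) hk
    · have hkj : k ≠ j := fun h => hk (h ▸ rfl)
      simpa [instCoeffBound, hkj] using abs_mul_add_mul_le (u := aR j k) (v := -aI j k)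
        (habs (hf' k).1) (habs (hf' k).2.2.1)
    · simpa [instCoeffBound] using abs_mul_add_mul_le (u := aR j k) (v := -aI j k)
        (habs (hf' k).2.1) (habs (hf' k).2.2.2)
  · rintro (k | k)
    · simpa [delayCoeffBound] using abs_mul_add_mul_le (u := bR j k) (v := -bI j k)
        (hg' k).1 (hg' k).2.2.1
    · simpa [delayCoeffBound] using abs_mul_add_mul_le (u := bR j k) (v := -bI j k)
        (hg' k).2.1 (hg' k).2.2.2
  · rintro (k | k) <;>
      exact ⟨by simp only [Sum.elim_inl, Sum.elim_inr]; linarith [(hτ j k).2],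
        by simp only [Sum.elim_inl, Sum.elim_inr]; linarith [(hτ j k).1]⟩
  · simp only [Sum.elim_inl]
    rw [hz.deriv_sub_eq_of_slopes hw ht j hfR hfI hgR hgI]
    simp only [Fintype.sum_sum_type, Sum.elim_inl, Sum.elim_inr, add_mul, ite_mul, zero_mul,
      sum_add_distrib, sum_ite_eq', mem_univ, if_true]
    ring

lemma hasDominatedDelayDerivAt_inr
    (hf : ∀ j, CondH1 (fR j) (fI j) (lRR j) (lRI j) (lIR j) (lII j))
    (hg : ∀ j, CondH2 (gR j) (gI j) (mRR j) (mRI j) (mIR j) (mII j))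
    {τb : ℝ} (hτ : ∀ j k, τ j k ∈ Set.Icc 0 τb)
    (hz : IsSolution n d aR aI bR bI τ uR uI fR fI gR gI zR zI)
    (hw : IsSolution n d aR aI bR bI τ uR uI fR fI gR gI wR wI) {t : ℝ} (ht : 0 ≤ t) (j : Fin n) :
    HasDominatedDelayDerivAt (fun p t => Sum.elim zR zI p t - Sum.elim wR wI p t)
      (instCoeffBound d aR aI lRR lRI lIR lII) (delayCoeffBound bR bI mRR mRI mIR mII) τb
      (.inr j) t := by
  have h := hz.swap.hasDominatedDelayDerivAt_inl (fun k => (hf k).swap) (fun k => (hg k).swap) hτ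
    hw.swap ht j
  rw [instCoeffBound_swap, delayCoeffBound_swap] at h
  refine HasDominatedDelayDerivAt.of_comp_equiv (Equiv.sumComm _ _) (p := .inl j) ?_
  convert h using 1
  · ext (k | k) <;> rfl
  all_goals rfl

lemma isEquilibrium_of_tendsto
    (hf : ∀ j, CondH1 (fR j) (fI j) (lRR j) (lRI j) (lIR j) (lII j))
    (hg : ∀ j, CondH2 (gR j) (gI j) (mRR j) (mRI j) (mIR j) (mII j))
    (hz : IsSolution n d aR aI bR bI τ uR uI fR fI gR gI zR zI) {LR LI : Fin n → ℝ}
    (hR : ∀ j, Tendsto (zR j) atTop (𝓝 (LR j))) (hI : ∀ j, Tendsto (zI j) atTop (𝓝 (LI j))) :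
    IsEquilibrium n d aR aI bR bI uR uI fR fI gR gI LR LI := by
  have hnow : ∀ {h : ℝ → ℝ → ℝ}, Continuous (fun p : ℝ × ℝ => h p.1 p.2) → ∀ k,
      Tendsto (fun t => h (zR k t) (zI k t)) atTop (𝓝 (h (LR k) (LI k))) :=
    fun hh k => (hh.tendsto _).comp ((hR k).prodMk_nhds (hI k))
  have hdel : ∀ {h : ℝ → ℝ → ℝ}, Continuous (fun p : ℝ × ℝ => h p.1 p.2) → ∀ k c,
      Tendsto (fun t => h (zR k (t - c)) (zI k (t - c))) atTop (𝓝 (h (LR k) (LI k))) :=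
    fun hh k c => (hnow hh k).comp (tendsto_atTop_atTop.2 fun b => ⟨b + c, fun t ht => by linarith⟩)
  constructor
  · intro j
    refine eq_zero_of_tendsto_deriv ((hz.1 j).differentiable one_ne_zero) (hR j) ?_
    refine Tendsto.congr' (eventually_atTop.2 ⟨0, fun t ht => (hz.2.2.1 j t ht).symm⟩) ?_
    refine ((((hR j).const_mul _).add (tendsto_finsetSum _ fun k _ => ?_)).add
      (tendsto_finsetSum _ fun k _ => ?_)).add tendsto_const_nhds
    · exact ((hnow (hf k).1.continuous k).const_mul _).sub
        ((hnow (hf k).2.1.continuous k).const_mul _)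
    · exact ((hdel (hg k).1.continuous k _).const_mul _).sub
        ((hdel (hg k).2.1.continuous k _).const_mul _)
  · intro j
    refine eq_zero_of_tendsto_deriv ((hz.2.1 j).differentiable one_ne_zero) (hI j) ?_
    refine Tendsto.congr' (eventually_atTop.2 ⟨0, fun t ht => (hz.2.2.2 j t ht).symm⟩) ?_
    refine ((((hI j).const_mul _).add (tendsto_finsetSum _ fun k _ => ?_)).add
      (tendsto_finsetSum _ fun k _ => ?_)).add tendsto_const_nhds
    · exact ((hnow (hf k).2.1.continuous k).const_mul _).add
        ((hnow (hf k).1.continuous k).const_mul _)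
    · exact ((hdel (hg k).2.1.continuous k _).const_mul _).add
        ((hdel (hg k).1.continuous k _).const_mul _)

end IsSolution

lemma IsEquilibrium.isSolution_const {zbR zbI : Fin n → ℝ}
    (h : IsEquilibrium n d aR aI bR bI uR uI fR fI gR gI zbR zbI) :
    IsSolution n d aR aI bR bI τ uR uI fR fI gR gI (fun j _ => zbR j) (fun j _ => zbI j) :=
  ⟨fun _ => contDiff_const, fun _ => contDiff_const, fun j _ _ => by simpa using (h.1 j).symm,
    fun j _ _ => by simpa using (h.2 j).symm⟩

theorem exists_isExpContracting_isSolution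
    (hf : ∀ j, CondH1 (fR j) (fI j) (lRR j) (lRI j) (lIR j) (lII j))
    (hg : ∀ j, CondH2 (gR j) (gI j) (mRR j) (mRI j) (mIR j) (mII j))
    {τb : ℝ} (hτb : 0 ≤ τb) (hτ : ∀ j k, τ j k ∈ Set.Icc 0 τb)
    {w : Fin n ⊕ Fin n → ℝ} (hw : ∀ p, 0 < w p)
    (hrow : ∀ p, ∑ q, instCoeffBound d aR aI lRR lRI lIR lII p q * w q
      + ∑ q, delayCoeffBound bR bI mRR mRI mIR mII p q * w q < 0) :
    ∃ δ > 0, IsExpContracting (fun z => IsSolution n d aR aI bR bI τ uR uI fR fI gR gI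
      (fun j => z (.inl j)) (fun j => z (.inr j))) w τb δ := by
  obtain ⟨δ, hδ, hrate⟩ := exists_pos_forall_add_exp_mul_add_mul_neg w τb hrow
  refine ⟨δ, hδ, fun z z' hz hz' M hM => ?_⟩
  have hz_elim : ∀ z : Fin n ⊕ Fin n → ℝ → ℝ,
      Sum.elim (fun j => z (.inl j)) (fun j => z (.inr j)) = z := fun z => by ext (j | j) <;> rfl
  refine abs_le_mul_exp_of_hasDominatedDelayDerivAt hw (fun p => ?_) hτb hδ.le hrate
    (fun t ht p => ?_) hM
  · simpa only [hz_elim] using (hz.differentiable p).fun_sub (hz'.differentiable p)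
  · rcases p with j | j
    · simpa only [hz_elim] using hz.hasDominatedDelayDerivAt_inl hf hg hτ hz' ht.le j
    · simpa only [hz_elim] using hz.hasDominatedDelayDerivAt_inr hf hg hτ hz' ht.le j

end Network

theorem stmt1_general
    (n : ℕ)
    (d : Fin n → ℝ)
    (aR aI bR bI τ : Fin n → Fin n → ℝ) (hτ : ∀ j k, 0 ≤ τ j k)
    (uR uI : Fin n → ℝ)
    (fR fI gR gI : Fin n → ℝ → ℝ → ℝ)
    (lRR lRI lIR lII mRR mRI mIR mII : Fin n → ℝ)
    (hf : ∀ j, CondH1 (fR j) (fI j) (lRR j) (lRI j) (lIR j) (lII j))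
    (hg : ∀ j, CondH2 (gR j) (gI j) (mRR j) (mRI j) (mIR j) (mII j))
    (ξ φ : Fin n → ℝ) (hξ : ∀ j, 0 < ξ j) (hφ : ∀ j, 0 < φ j)
    (hT3 : ∀ j : Fin n,
      ξ j * (-(d j) + max (aR j j) 0 * lRR j + max (-(aI j j)) 0 * lIR j)
      + (∑ k ∈ Finset.univ.erase j, ξ k * |aR j k| * lRR k)
      + (∑ k, φ k * |aR j k| * lRI k)
      + (∑ k ∈ Finset.univ.erase j, ξ k * |aI j k| * lIR k)
      + (∑ k, φ k * |aI j k| * lII k)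
      + (∑ k, ξ k * |bR j k| * mRR k) + (∑ k, φ k * |bR j k| * mRI k)
      + (∑ k, ξ k * |bI j k| * mIR k) + (∑ k, φ k * |bI j k| * mII k) < 0)
    (hT4 : ∀ j : Fin n,
      φ j * (-(d j) + max (aR j j) 0 * lII j + max (aI j j) 0 * lRI j)
      + (∑ k, ξ k * |aR j k| * lIR k)
      + (∑ k ∈ Finset.univ.erase j, φ k * |aR j k| * lII k)
      + (∑ k, ξ k * |aI j k| * lRR k)
      + (∑ k ∈ Finset.univ.erase j, φ k * |aI j k| * lRI k)
      + (∑ k, ξ k * |bR j k| * mIR k) + (∑ k, φ k * |bR j k| * mII k)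
      + (∑ k, ξ k * |bI j k| * mRR k) + (∑ k, φ k * |bI j k| * mRI k) < 0)
    (hsol : ∃ zR zI, IsSolution n d aR aI bR bI τ uR uI fR fI gR gI zR zI) :
    ∃ zbR zbI : Fin n → ℝ,
      IsEquilibrium n d aR aI bR bI uR uI fR fI gR gI zbR zbI ∧
      (∀ wR wI : Fin n → ℝ,
        IsEquilibrium n d aR aI bR bI uR uI fR fI gR gI wR wI → wR = zbR ∧ wI = zbI) ∧
      (∀ zR zI : Fin n → ℝ → ℝ,
        IsSolution n d aR aI bR bI τ uR uI fR fI gR gI zR zI →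
        ∃ c δ : ℝ, 0 < c ∧ 0 < δ ∧ ∀ t : ℝ, 0 ≤ t →
          Real.sqrt ((∑ j, (zR j t - zbR j) ^ 2) + ∑ j, (zI j t - zbI j) ^ 2)
            ≤ c * Real.exp (-δ * t)) := by
  obtain ⟨τb, hτb⟩ := Finite.exists_le fun jk : Fin n × Fin n => τ jk.1 jk.2
  have hτ' : ∀ j k, τ j k ∈ Set.Icc 0 (max τb 0) :=
    fun j k => ⟨hτ j k, (hτb (j, k)).trans (le_max_left _ _)⟩
  have hw : ∀ p, 0 < Sum.elim ξ φ p := by rintro (j | j) <;> simp [hξ, hφ]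
  obtain ⟨δ, hδ, hS⟩ := exists_isExpContracting_isSolution (uR := uR) (uI := uI) hf hg
    (le_max_right _ _) hτ' hw (sum_coeffBound_mul_neg hT3 hT4)
  obtain ⟨zR, zI, hz⟩ := hsol
  obtain ⟨L, hL⟩ := hS.exists_tendsto hw hδ (fun _ hz _ hr => hz.comp_add_const hr) hz
    fun p => (hz.differentiable p).continuous
  have hL' := hz.isEquilibrium_of_tendsto hf hg (fun j => hL (.inl j)) (fun j => hL (.inr j))
  refine ⟨_, _, hL', fun wR wI hw' => ?_, fun zR zI hz => ?_⟩
  · have := hS.eq_of_const hw hδ (x := Sum.elim wR wI) hw'.isSolution_const hL'.isSolution_const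
    exact ⟨funext fun j => congrFun this (.inl j), funext fun j => congrFun this (.inr j)⟩
  · obtain ⟨M, hM₀, hM⟩ := hS.exists_abs_sub_le hw hz hL'.isSolution_const
      (fun p => (hz.differentiable p).continuous) fun _ => continuous_const
    refine ⟨√(∑ p, Sum.elim ξ φ p ^ 2) * M + 1, δ, by positivity, hδ, fun t ht => ?_⟩
    have := sqrt_sum_sq_le_of_abs_le (x := fun p => Sum.elim zR zI p t - L p)
      (by positivity) fun p => (hM t ht p).trans_eq (mul_assoc _ _ _)
    rw [Fintype.sum_sum_type] at this
    calc _ ≤ √(∑ p, Sum.elim ξ φ p ^ 2) * (M * exp (-δ * t)) := this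
      _ ≤ _ := by nlinarith [exp_pos (-δ * t)]

theorem stmt1
    (n : ℕ) (hn : 1 ≤ n)
    (d : Fin n → ℝ) (hd : ∀ j, 0 < d j)
    (aR aI bR bI τ : Fin n → Fin n → ℝ) (hτ : ∀ j k, 0 ≤ τ j k)
    (uR uI : Fin n → ℝ)
    (fR fI gR gI : Fin n → ℝ → ℝ → ℝ)
    (lRR lRI lIR lII mRR mRI mIR mII : Fin n → ℝ)
    (hl : ∀ j, 0 < lRR j ∧ 0 < lRI j ∧ 0 < lIR j ∧ 0 < lII j)
    (hm : ∀ j, 0 < mRR j ∧ 0 < mRI j ∧ 0 < mIR j ∧ 0 < mII j)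
    (hf : ∀ j, CondH1 (fR j) (fI j) (lRR j) (lRI j) (lIR j) (lII j))
    (hg : ∀ j, CondH2 (gR j) (gI j) (mRR j) (mRI j) (mIR j) (mII j))
    (ξ φ : Fin n → ℝ) (hξ : ∀ j, 0 < ξ j) (hφ : ∀ j, 0 < φ j)
    (hT3 : ∀ j : Fin n,
      ξ j * (-(d j) + max (aR j j) 0 * lRR j + max (-(aI j j)) 0 * lIR j)
      + (∑ k ∈ Finset.univ.erase j, ξ k * |aR j k| * lRR k)
      + (∑ k, φ k * |aR j k| * lRI k)
      + (∑ k ∈ Finset.univ.erase j, ξ k * |aI j k| * lIR k)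
      + (∑ k, φ k * |aI j k| * lII k)
      + (∑ k, ξ k * |bR j k| * mRR k) + (∑ k, φ k * |bR j k| * mRI k)
      + (∑ k, ξ k * |bI j k| * mIR k) + (∑ k, φ k * |bI j k| * mII k) < 0)
    (hT4 : ∀ j : Fin n,
      φ j * (-(d j) + max (aR j j) 0 * lII j + max (aI j j) 0 * lRI j)
      + (∑ k, ξ k * |aR j k| * lIR k)
      + (∑ k ∈ Finset.univ.erase j, φ k * |aR j k| * lII k)
      + (∑ k, ξ k * |aI j k| * lRR k)
      + (∑ k ∈ Finset.univ.erase j, φ k * |aI j k| * lRI k)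
      + (∑ k, ξ k * |bR j k| * mIR k) + (∑ k, φ k * |bR j k| * mII k)
      + (∑ k, ξ k * |bI j k| * mRR k) + (∑ k, φ k * |bI j k| * mRI k) < 0)
    (hsol : ∃ zR zI, IsSolution n d aR aI bR bI τ uR uI fR fI gR gI zR zI) :
    ∃ zbR zbI : Fin n → ℝ,
      IsEquilibrium n d aR aI bR bI uR uI fR fI gR gI zbR zbI ∧
      (∀ wR wI : Fin n → ℝ,
        IsEquilibrium n d aR aI bR bI uR uI fR fI gR gI wR wI → wR = zbR ∧ wI = zbI) ∧
      (∀ zR zI : Fin n → ℝ → ℝ,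
        IsSolution n d aR aI bR bI τ uR uI fR fI gR gI zR zI →
        ∃ c δ : ℝ, 0 < c ∧ 0 < δ ∧ ∀ t : ℝ, 0 ≤ t →
          Real.sqrt ((∑ j, (zR j t - zbR j) ^ 2) + ∑ j, (zI j t - zbI j) ^ 2)
            ≤ c * Real.exp (-δ * t)) :=
  stmt1_general n d aR aI bR bI τ hτ uR uI fR fI gR gI lRR lRI lIR lII mRR mRI mIR mII hf hg ξ φ hξ
    hφ hT3 hT4 hsol
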